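/- arXiv:2302.01325 — 6 statements merged into one kernel-verified Lean document; each statement's English description precedes it below -/
import Mathlib

section
/- Let d ≥ 2 and let ω = e^{2πi/d}. Suppose W(x) = λ₀ + λ₁x + ... + λ_{d-1}x^{d-1} is a polynomial with rational coefficients such that ω^n is a root of W for every proper divisor n of d (i.e., n ≠ d and d/n ∈ ℕ). Then λ₀ = λ₁ = ... = λ_{d-1}. -/
noncomputable def rootOfUnity (d : ℕ) : ℂ := Complex.exp (2 * Real.pi * Complex.I / d)

/-!
Write `W = ∑ λᵢ Xⁱ ∈ ℚ[X]` and `d = k * m`. For a proper divisor `k` of `d`, `ω ^ k` is a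
primitive `m`-th root of unity with `m ≠ 1`, so `Φ_m ∣ W`. The cyclotomic polynomials `Φ_m`,
`1 ≠ m ∣ d`, are pairwise coprime over `ℚ` with product `1 + X + ⋯ + X ^ (d - 1)`, which
therefore divides `W`. As `deg W < d`, `W` is a constant multiple of that sum.
-/

open Polynomial Finset

theorem Polynomial.cyclotomic_dvd_of_aeval_eq_zero {K : Type*} [Field K] [CharZero K] {μ : K}
    {n : ℕ} (hμ : IsPrimitiveRoot μ n) (hn : 0 < n) {p : ℚ[X]} (hp : aeval μ p = 0) :
    cyclotomic n ℚ ∣ p := by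
  rw [cyclotomic_eq_minpoly_rat hμ hn]
  exact minpoly.dvd ℚ μ hp

theorem Polynomial.geom_sum_X_dvd_of_aeval_pow_eq_zero {K : Type*} [Field K] [CharZero K]
    {ζ : K} {d : ℕ} (hζ : IsPrimitiveRoot ζ d) (hd : 0 < d) {p : ℚ[X]}
    (hp : ∀ k : ℕ, 0 < k → k ∣ d → k ≠ d → aeval (ζ ^ k) p = 0) :
    ∑ i ∈ range d, (X : ℚ[X]) ^ i ∣ p := by
  rw [← prod_cyclotomic_eq_geom_sum hd]
  refine prod_dvd_of_coprime (fun a _ b _ hab => cyclotomic.isCoprime_rat hab) fun m hm => ?_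
  obtain ⟨hm1, ⟨k, hdk⟩, -⟩ : m ≠ 1 ∧ m ∣ d ∧ d ≠ 0 := by simpa using hm
  rw [mul_comm] at hdk
  have hm : 0 < m := Nat.pos_of_mul_pos_left (hdk ▸ hd)
  have hk : 0 < k := Nat.pos_of_mul_pos_right (hdk ▸ hd)
  have hkd : k ≠ d := fun h => hm1 (by nlinarith)
  exact cyclotomic_dvd_of_aeval_eq_zero (hζ.pow hd hdk) hm (hp k hk ⟨m, hdk⟩ hkd)

theorem Polynomial.coeff_geom_sum_X {R : Type*} [Semiring R] {n i : ℕ} (hi : i < n) :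
    (∑ j ∈ range n, (X : R[X]) ^ j).coeff i = 1 := by
  simp [finsetSum_coeff, coeff_X_pow, hi]

theorem Polynomial.aeval_ofFn {R A : Type*} [CommSemiring R] [DecidableEq R] [Semiring A]
    [Algebra R A] (x : A) {n : ℕ} (v : Fin n → R) :
    aeval x (ofFn n v) = ∑ i : Fin n, algebraMap R A (v i) * x ^ (i : ℕ) := by
  simp [ofFn_eq_sum_monomial, aeval_monomial]

theorem Polynomial.eq_of_geom_sum_X_dvd_ofFn {R : Type*} [Semiring R] [DecidableEq R] {n : ℕ}
    (v : Fin n → R) (h : ∑ i ∈ range n, (X : R[X]) ^ i ∣ ofFn n v) (i j : Fin n) :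
    v i = v j := by
  nontriviality R
  have hn : n ≠ 0 := i.pos.ne'
  have hdeg : (ofFn n v).natDegree ≤ (∑ i ∈ range n, (X : R[X]) ^ i).natDegree :=
    calc (ofFn n v).natDegree ≤ n - 1 := Nat.le_sub_one_of_lt (ofFn_natDegree_lt i.pos v)
      _ ≤ _ := le_natDegree_of_ne_zero (by rw [coeff_geom_sum_X (Nat.sub_one_lt hn)]; exact one_ne_zero)
  have hconst := eq_mul_leadingCoeff_of_monic_of_dvd_of_natDegree_le (monic_geom_sum_X hn) h hdeg
  have hcoeff (k : Fin n) : v k = (ofFn n v).leadingCoeff := by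
    rw [← ofFn_coeff_eq_val_of_lt v k.isLt, hconst, coeff_mul_C, coeff_geom_sum_X k.isLt,
      one_mul, ← hconst]
  rw [hcoeff i, hcoeff j]

theorem proper_divisor_roots_imply_equal_coeffs_general (d : ℕ) (lam : Fin d → ℚ)
    (hroot : ∀ n : ℕ, 0 < n → n ∣ d → n ≠ d →
      ∑ i : Fin d, (lam i : ℂ) * (rootOfUnity d) ^ (n * (i : ℕ)) = 0) :
    ∀ i j : Fin d, lam i = lam j := by
  rcases Nat.eq_zero_or_pos d with rfl | hd
  · exact fun i => i.elim0
  have hω : IsPrimitiveRoot (rootOfUnity d) d := Complex.isPrimitiveRoot_exp d hd.ne'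
  refine eq_of_geom_sum_X_dvd_ofFn lam <|
    geom_sum_X_dvd_of_aeval_pow_eq_zero hω hd fun k hk hkd hkne => ?_
  simpa [aeval_ofFn, pow_mul] using hroot k hk hkd hkne

theorem proper_divisor_roots_imply_equal_coeffs (d : ℕ) (hd : 2 ≤ d) (lam : Fin d → ℚ)
    (hroot : ∀ n : ℕ, 0 < n → n ∣ d → n ≠ d →
      ∑ i : Fin d, (lam i : ℂ) * (rootOfUnity d) ^ (n * (i : ℕ)) = 0) :
    ∀ i j : Fin d, lam i = lam j :=
  proper_divisor_roots_imply_equal_coeffs_general d lam hroot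
end

section
/- For any integers d ≥ 2, 1 ≤ k ≤ d−1, and 0 ≤ i ≤ d−1, with ω = e^{2πi/d}, one has Σ_{j=0, j≠i}^{d-1} (1 − ω^{k(j−i)})/(1 − ω^{i−j}) = k. -/
open Finset

theorem one_sub_pow_div_one_sub_inv {K : Type*} [Field K] {z : K} (hz0 : z ≠ 0) (hz1 : z ≠ 1)
    (k : ℕ) : (1 - z ^ k) / (1 - z⁻¹) = -∑ m ∈ range k, z ^ (m + 1) := by
  have hz1' : z - 1 ≠ 0 := sub_ne_zero.mpr hz1
  simp_rw [pow_succ', ← mul_sum, geom_sum_eq hz1]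
  field_simp
  ring

theorem geom_sum_eq_zero_of_pow_eq_one {K : Type*} [Field K] {ζ : K} {d : ℕ} (h1 : ζ ≠ 1)
    (hd : ζ ^ d = 1) : ∑ m ∈ range d, ζ ^ m = 0 := by
  rw [geom_sum_eq h1, hd, sub_self, zero_div]

namespace IsPrimitiveRoot

variable {K : Type*} [Field K] {ζ : K} {d : ℕ}

theorem zpow_fin_sub_ne_one (hζ : IsPrimitiveRoot ζ d) {i j : Fin d} (hij : j ≠ i) :
    ζ ^ ((j : ℤ) - i) ≠ 1 := by
  have hζ0 : ζ ≠ 0 := hζ.ne_zero i.pos.ne'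
  rw [zpow_sub₀ hζ0, Ne, div_eq_one_iff_eq (zpow_ne_zero _ hζ0), zpow_natCast, zpow_natCast]
  exact fun h => hij (Fin.ext (hζ.pow_inj j.isLt i.isLt h))

theorem sum_fin_zpow_sub_pow (hζ : IsPrimitiveRoot ζ d) (i : Fin d) {n : ℕ} (hn0 : n ≠ 0)
    (hnd : n < d) : ∑ j : Fin d, (ζ ^ ((j : ℤ) - i)) ^ n = 0 := by
  have hζ0 : ζ ≠ 0 := hζ.ne_zero i.pos.ne'
  have hterm (j : Fin d) : (ζ ^ ((j : ℤ) - i)) ^ n = (ζ ^ n) ^ (j : ℕ) / (ζ ^ n) ^ (i : ℕ) := by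
    rw [zpow_sub₀ hζ0, div_pow, zpow_natCast, zpow_natCast]
    ring
  have hpow : (ζ ^ n) ^ d = 1 := by rw [pow_right_comm, hζ.pow_eq_one, one_pow]
  rw [sum_congr rfl fun j _ => hterm j, ← sum_div,
    Fin.sum_univ_eq_sum_range (fun m => (ζ ^ n) ^ m),
    geom_sum_eq_zero_of_pow_eq_one (hζ.pow_ne_one_of_pos_of_lt hn0 hnd) hpow, zero_div]

theorem sum_erase_fin_zpow_sub_pow (hζ : IsPrimitiveRoot ζ d) (i : Fin d) {n : ℕ} (hn0 : n ≠ 0)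
    (hnd : n < d) : ∑ j ∈ univ.erase i, (ζ ^ ((j : ℤ) - i)) ^ n = -1 := by
  rw [sum_erase_eq_sub (mem_univ i), hζ.sum_fin_zpow_sub_pow i hn0 hnd, sub_self, zpow_zero,
    one_pow, zero_sub]

end IsPrimitiveRoot

theorem sum_ratio_roots_eq_general (d : ℕ) (k : ℕ) (hk2 : k ≤ d - 1)
    (i : Fin d) :
    ∑ j ∈ Finset.univ.erase i,
      (1 - (rootOfUnity d) ^ ((k : ℤ) * ((j : ℤ) - (i : ℤ)))) /
        (1 - (rootOfUnity d) ^ ((i : ℤ) - (j : ℤ))) = (k : ℂ) := by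
  have hω : IsPrimitiveRoot (rootOfUnity d) d := Complex.isPrimitiveRoot_exp d i.pos.ne'
  have hterm : ∀ j ∈ univ.erase i,
      (1 - (rootOfUnity d) ^ ((k : ℤ) * ((j : ℤ) - (i : ℤ)))) /
        (1 - (rootOfUnity d) ^ ((i : ℤ) - (j : ℤ))) =
      -∑ m ∈ range k, (rootOfUnity d ^ ((j : ℤ) - i)) ^ (m + 1) := by
    intro j hj
    rw [mul_comm (k : ℤ), zpow_mul, zpow_natCast, ← neg_sub (j : ℤ), zpow_neg]
    exact one_sub_pow_div_one_sub_inv (zpow_ne_zero _ (hω.ne_zero i.pos.ne'))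
      (hω.zpow_fin_sub_ne_one (ne_of_mem_erase hj)) k
  rw [sum_congr rfl hterm, sum_neg_distrib, sum_comm, sum_congr rfl fun m hm =>
    hω.sum_erase_fin_zpow_sub_pow i m.succ_ne_zero (by rw [mem_range] at hm; omega)]
  simp

theorem sum_ratio_roots_eq (d : ℕ) (hd : 2 ≤ d) (k : ℕ) (hk1 : 1 ≤ k) (hk2 : k ≤ d - 1)
    (i : Fin d) :
    ∑ j ∈ Finset.univ.erase i,
      (1 - (rootOfUnity d) ^ ((k : ℤ) * ((j : ℤ) - (i : ℤ)))) /
        (1 - (rootOfUnity d) ^ ((i : ℤ) - (j : ℤ))) = (k : ℂ) :=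
  sum_ratio_roots_eq_general d k hk2 i
end

section
/- Let A₀ and A₁ be unitary operators on ℂ^d whose eigenbases {|s_i⟩} and {|t_j⟩} are mutually unbiased, i.e. |⟨s_i|t_j⟩|² = 1/d for all i,j. Then A₀ and A₁ have no common nontrivial invariant subspace: if V ⊆ ℂ^d satisfies A₀V ⊆ V, A₁V ⊆ V and 0 < dim V, then V = ℂ^d. -/
/-!
Since the eigenvalues `ω ^ i` of `A₀` are distinct, the polynomial `∏_{k ≠ i} (X - ω ^ k)` evaluated
at `A₀` maps a vector to a nonzero multiple of its `s_i`-component. Hence an `A₀`-invariant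
subspace contains `s_i` as soon as one of its vectors has a nonzero `s_i`-component, and a nonzero
one contains some `s_i`. Unbiasedness makes every `t_j`-component of `s_i` nonzero, so the same
argument for `A₁` puts every `t_j` into the subspace.
-/

open Polynomial

namespace Submodule

variable {K M ι κ : Type*} [Field K] [AddCommGroup M] [Module K M]
  [Fintype ι] [DecidableEq ι] [Fintype κ] [DecidableEq κ] {V : Submodule K M}

theorem repr_smul_mem_of_map_le {A : Module.End K M} {b : Module.Basis ι K M} {μ : ι → K}
    (hA : ∀ i, A (b i) = μ i • b i) (hμ : Function.Injective μ) (hV : V.map A ≤ V)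
    {v : M} (hv : v ∈ V) (i : ι) : b.repr v i • b i ∈ V := by
  set p : K[X] := ∏ k ∈ Finset.univ.erase i, (X - C (μ k))
  have hp_ne : p.eval (μ i) ≠ 0 := by
    simp only [p, eval_prod, eval_sub, eval_X, eval_C, Finset.prod_ne_zero_iff,
      Finset.mem_erase, sub_ne_zero]
    exact fun k hk => hμ.ne hk.1.symm
  have hp_eq : ∀ k, k ≠ i → p.eval (μ k) = 0 := fun k hk => by
    simp only [p, eval_prod, eval_sub, eval_X, eval_C]
    exact Finset.prod_eq_zero (Finset.mem_erase.mpr ⟨hk, Finset.mem_univ k⟩) (sub_self _)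
  have hpv : aeval A p v = p.eval (μ i) • b.repr v i • b i := by
    conv_lhs => rw [← b.sum_repr v]
    rw [map_sum, Finset.sum_eq_single i (fun k _ hk => by
      rw [map_smul, Module.End.aeval_apply_of_mem_apply_eq_smul (hA k), hp_eq k hk, zero_smul,
        smul_zero]) (by simp)]
    rw [map_smul, Module.End.aeval_apply_of_mem_apply_eq_smul (hA i), smul_comm]
  have hmem := aeval_apply_smul_mem_of_le_comap hv p A (map_le_iff_le_comap.mp hV)
  rw [hpv] at hmem
  exact (V.smul_mem_iff hp_ne).mp hmem

theorem basis_mem_of_map_le {A : Module.End K M} {b : Module.Basis ι K M} {μ : ι → K}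
    (hA : ∀ i, A (b i) = μ i • b i) (hμ : Function.Injective μ) (hV : V.map A ≤ V)
    {v : M} (hv : v ∈ V) {i : ι} (hvi : b.repr v i ≠ 0) : b i ∈ V :=
  (V.smul_mem_iff hvi).mp (repr_smul_mem_of_map_le hA hμ hV hv i)

theorem exists_basis_mem_of_map_le {A : Module.End K M} {b : Module.Basis ι K M} {μ : ι → K}
    (hA : ∀ i, A (b i) = μ i • b i) (hμ : Function.Injective μ) (hV : V.map A ≤ V)
    (hV_ne : V ≠ ⊥) : ∃ i, b i ∈ V := by
  obtain ⟨v, hv, hv_ne⟩ := exists_mem_ne_zero_of_ne_bot hV_ne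
  obtain ⟨i, hvi⟩ := Finsupp.ne_iff.mp (b.repr.map_ne_zero_iff.mpr hv_ne)
  exact ⟨i, basis_mem_of_map_le hA hμ hV hv hvi⟩

theorem eq_top_of_map_le_of_repr_ne_zero {A B : Module.End K M} {b : Module.Basis ι K M}
    {c : Module.Basis κ K M} {μ : ι → K} {ν : κ → K} (hA : ∀ i, A (b i) = μ i • b i)
    (hB : ∀ j, B (c j) = ν j • c j) (hμ : Function.Injective μ) (hν : Function.Injective ν)
    (hbc : ∀ i j, c.repr (b i) j ≠ 0) (hVA : V.map A ≤ V) (hVB : V.map B ≤ V)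
    (hV_ne : V ≠ ⊥) : V = ⊤ := by
  obtain ⟨i, hi⟩ := exists_basis_mem_of_map_le hA hμ hVA hV_ne
  rw [eq_top_iff, ← c.span_eq, span_le, Set.range_subset_iff]
  exact fun j => basis_mem_of_map_le hB hν hVB hi (hbc i j)

end Submodule

theorem rootOfUnity_pow_injective {d : ℕ} (hd : 0 < d) :
    Function.Injective fun i : Fin d => rootOfUnity d ^ (i : ℕ) := fun i j hij =>
  Fin.ext ((Complex.isPrimitiveRoot_exp d hd.ne').pow_inj i.isLt j.isLt hij)

theorem mub_observables_no_common_invariant_subspace (d : ℕ) (hd : 0 < d)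
    (A0 A1 : EuclideanSpace ℂ (Fin d) →ₗ[ℂ] EuclideanSpace ℂ (Fin d))
    (s t : OrthonormalBasis (Fin d) ℂ (EuclideanSpace ℂ (Fin d)))
    (hA0 : ∀ i, A0 (s i) = (rootOfUnity d) ^ (i : ℕ) • s i)
    (hA1 : ∀ i, A1 (t i) = (rootOfUnity d) ^ (i : ℕ) • t i)
    (hMUB : ∀ i j, ‖(inner ℂ (s i) (t j) : ℂ)‖ ^ 2 = 1 / d)
    (V : Submodule ℂ (EuclideanSpace ℂ (Fin d)))
    (hV0 : V.map A0 ≤ V) (hV1 : V.map A1 ≤ V) (hVne : V ≠ ⊥) :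
    V = ⊤ := by
  refine V.eq_top_of_map_le_of_repr_ne_zero (b := s.toBasis) (c := t.toBasis)
    (by simpa using hA0) (by simpa using hA1) (rootOfUnity_pow_injective hd)
    (rootOfUnity_pow_injective hd) (fun i j h => ?_) hV0 hV1 hVne
  have hst := hMUB i j
  rw [OrthonormalBasis.coe_toBasis_repr_apply, OrthonormalBasis.repr_apply_apply, OrthonormalBasis.coe_toBasis] at h
  rw [norm_inner_symm, h, norm_zero, sq, zero_mul] at hst
  exact one_div_ne_zero (Nat.cast_ne_zero.mpr hd.ne') hst.symm
end

section
/- Let α₀,...,α_{d-1} > 0 with Σᵢ αᵢ² = 1, and define γ(α) = d / (Σ_{i≠j} αᵢ/α_j) and δ_k(α) = −(γ(α)/d) Σ_{i≠j} (αᵢ/α_j) ω^{k(d−j)} for k = 1,...,d−1, where ω = e^{2πi/d}. Then the matrix Z̃ = (1 + γ(α))𝟙 − Σ_{k=1}^{d-1} δ_k(α) Z_d^k (with Z_d = Σ_l ω^l |l⟩⟨l|) is diagonal with eigenvalues λ_l = (γ(α)/α_l)·Σᵢ αᵢ > 0 for each l; in particular Z̃ is positive definite and invertible. -/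
open Matrix

/-- The clock matrix `Z_d = ∑ ω^l |l⟩⟨l|`. -/
noncomputable def clockZ (d : ℕ) : Matrix (Fin d) (Fin d) ℂ :=
  Matrix.diagonal fun l => (rootOfUnity d) ^ (l : ℕ)

/-!
Since `Z_d` is diagonal, so is `Z̃`, with `l`-th entry `1 + γ - ∑_{k=1}^{d-1} δ_k ω^{kl}`.
Swapping the sums in `δ_k` gives `δ_k = -(γ/d) ∑_j F_j ω^{-kj}` with `F_j = ∑_{i ≠ j} α_i / α_j`,
and the orthogonality relation `∑_{k=1}^{d-1} ω^{k(l-j)} = d [j = l] - 1` turns the entry into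
`1 + γ + γ F_l - γ S / d` with `S = ∑_j F_j = d / γ`, that is `γ (1 + F_l) = (γ / α_l) ∑_i α_i`.
-/

open Finset

theorem Fin.dvd_sub_val_add_val_iff {n : ℕ} (j l : Fin n) : n ∣ n - j + l ↔ j = l := by
  refine ⟨fun h => Fin.ext ?_, fun h => ⟨1, by omega⟩⟩
  have : n - j + l = n := Nat.eq_of_dvd_of_lt_two_mul (by omega) h (by omega)
  omega

section OffDiagonal

variable {ι : Type*} [Fintype ι] [DecidableEq ι]

theorem Finset.sum_sum_erase_comm {M : Type*} [AddCommMonoid M] (g : ι → ι → M) :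
    ∑ i, ∑ j ∈ univ.erase i, g i j = ∑ j, ∑ i ∈ univ.erase j, g i j :=
  Finset.sum_comm' fun _ _ => by simp [ne_comm]

theorem Finset.sum_sum_erase_pos [Nontrivial ι] {M : Type*} [AddCommMonoid M] [PartialOrder M]
    [IsOrderedCancelAddMonoid M] {g : ι → ι → M} (hg : ∀ i j, 0 < g i j) :
    0 < ∑ i, ∑ j ∈ univ.erase i, g i j :=
  sum_pos (fun i _ => sum_pos (fun j _ => hg i j) univ_nontrivial.erase_nonempty) univ_nonempty

theorem Finset.sum_div_eq_one_add_sum_erase_div {K : Type*} [DivisionSemiring K] {α : ι → K}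
    {l : ι} (hl : α l ≠ 0) : ∑ i, α i / α l = 1 + ∑ i ∈ univ.erase l, α i / α l := by
  rw [← add_sum_erase _ _ (mem_univ l), div_self hl]

end OffDiagonal

namespace IsPrimitiveRoot

section Orthogonality

variable {R : Type*} [CommRing R] [IsDomain R] {ζ : R} {n : ℕ}

theorem sum_range_pow_mul_eq_ite (h : IsPrimitiveRoot ζ n) (m : ℕ) :
    ∑ k ∈ range n, ζ ^ (k * m) = if n ∣ m then (n : R) else 0 := by
  simp_rw [mul_comm _ m, pow_mul]
  split_ifs with hm
  · simp [(h.pow_eq_one_iff_dvd m).2 hm]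
  · have hne : 1 - ζ ^ m ≠ 0 :=
      sub_ne_zero_of_ne fun h1 => hm ((h.pow_eq_one_iff_dvd m).1 h1.symm)
    refine eq_zero_of_ne_zero_of_mul_left_eq_zero hne ?_
    rw [mul_neg_geom_sum, ← pow_mul, mul_comm, pow_mul, h.pow_eq_one, one_pow, sub_self]

theorem sum_Icc_pow_mul_eq_ite (h : IsPrimitiveRoot ζ n) (hn : n ≠ 0) (m : ℕ) :
    ∑ k ∈ Icc 1 (n - 1), ζ ^ (k * m) = (if n ∣ m then (n : R) else 0) - 1 := by
  have hIcc : Icc 1 (n - 1) = (range n).erase 0 := by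
    ext k
    simp only [mem_Icc, mem_erase, mem_range]
    omega
  rw [hIcc, sum_erase_eq_sub (by simpa using Nat.pos_of_ne_zero hn), h.sum_range_pow_mul_eq_ite,
    zero_mul, pow_zero]

theorem sum_Icc_sum_mul_pow_mul_pow (h : IsPrimitiveRoot ζ n) (f : Fin n → R) (l : Fin n) :
    ∑ k ∈ Icc 1 (n - 1), (∑ j, f j * ζ ^ (k * (n - j))) * (ζ ^ (l : ℕ)) ^ k
      = n * f l - ∑ j, f j := by
  have horth (j : Fin n) : ∑ k ∈ Icc 1 (n - 1), ζ ^ (k * (n - j)) * (ζ ^ (l : ℕ)) ^ k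
      = (if j = l then (n : R) else 0) - 1 := by
    simp_rw [← pow_mul, ← pow_add, Nat.mul_comm (l : ℕ), ← Nat.mul_add]
    rw [h.sum_Icc_pow_mul_eq_ite (Fin.pos l).ne',
      if_congr (Fin.dvd_sub_val_add_val_iff j l) rfl rfl]
  simp_rw [sum_mul, mul_assoc]
  rw [sum_comm]
  simp_rw [← mul_sum, horth, mul_sub, mul_one, sum_sub_distrib, mul_ite, mul_zero, sum_ite_eq',
    mem_univ, if_true, mul_comm]

end Orthogonality

theorem ofReal_one_add_sub_sum_Icc_eq {ω : ℂ} {d : ℕ} (hω : IsPrimitiveRoot ω d)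
    (F : Fin d → ℝ) {γ : ℝ} (hγ : γ * ∑ j, F j = d) (l : Fin d) :
    ((1 + γ : ℝ) : ℂ) - ∑ k ∈ Icc 1 (d - 1),
        (-((γ / d : ℝ) : ℂ) * ∑ j, (F j : ℂ) * ω ^ (k * (d - j))) * (ω ^ (l : ℕ)) ^ k
      = ((γ * (1 + F l) : ℝ) : ℂ) := by
  have hd : (d : ℝ) ≠ 0 := Nat.cast_ne_zero.2 (Fin.pos l).ne'
  have hreal : 1 + γ + γ / d * (d * F l - ∑ j, F j) = γ * (1 + F l) := by
    field_simp
    linear_combination -hγ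
  simp_rw [mul_assoc, ← mul_sum, hω.sum_Icc_sum_mul_pow_mul_pow, ← hreal]
  push_cast
  ring

end IsPrimitiveRoot

theorem smul_one_sub_sum_smul_clockZ_pow (d : ℕ) (c : ℂ) (δ : ℕ → ℂ) (s : Finset ℕ) :
    c • (1 : Matrix (Fin d) (Fin d) ℂ) - ∑ k ∈ s, δ k • clockZ d ^ k
      = diagonal fun l : Fin d => c - ∑ k ∈ s, δ k * (rootOfUnity d ^ (l : ℕ)) ^ k := by
  ext x y
  rcases eq_or_ne x y with rfl | hxy <;> simp [clockZ, diagonal_pow, Matrix.sum_apply, *]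

theorem Ztilde_positive_definite_general (d : ℕ) (hd : 2 ≤ d) (α : Fin d → ℝ)
    (hα : ∀ i, 0 < α i) :
    let γ : ℝ := d / (∑ i : Fin d, ∑ j ∈ Finset.univ.erase i, α i / α j)
    let δ : ℕ → ℂ := fun k =>
      -(((γ / d : ℝ) : ℂ)) * ∑ i : Fin d, ∑ j ∈ Finset.univ.erase i,
        ((α i / α j : ℝ) : ℂ) * (rootOfUnity d) ^ (k * (d - (j : ℕ)))
    let Ztilde : Matrix (Fin d) (Fin d) ℂ :=
      (((1 + γ : ℝ)) : ℂ) • (1 : Matrix (Fin d) (Fin d) ℂ)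
        - ∑ k ∈ Finset.Icc 1 (d - 1), δ k • (clockZ d) ^ k
    Ztilde = Matrix.diagonal (fun l => (((γ / α l) * ∑ i, α i : ℝ) : ℂ)) ∧
    (∀ l : Fin d, 0 < (γ / α l) * ∑ i, α i) ∧ IsUnit Ztilde := by
  intro γ δ Ztilde
  have : Nontrivial (Fin d) := Fin.nontrivial_iff_two_le.2 hd
  have hω : IsPrimitiveRoot (rootOfUnity d) d := Complex.isPrimitiveRoot_exp d (by omega)
  set F : Fin d → ℝ := fun j => ∑ i ∈ univ.erase j, α i / α j
  have hSpos : 0 < ∑ i, ∑ j ∈ univ.erase i, α i / α j :=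
    sum_sum_erase_pos fun i j => div_pos (hα i) (hα j)
  have hγ : γ * ∑ j, F j = d := by
    rw [← sum_sum_erase_comm]
    exact div_mul_cancel₀ _ hSpos.ne'
  have hδ (k : ℕ) :
      δ k = -((γ / d : ℝ) : ℂ) * ∑ j, (F j : ℂ) * rootOfUnity d ^ (k * (d - j)) := by
    simp only [δ, F]
    rw [sum_sum_erase_comm]
    push_cast
    simp only [sum_mul]
  have hF (l : Fin d) : γ / α l * ∑ i, α i = γ * (1 + F l) := by
    rw [mul_comm_div γ (α l), sum_div, sum_div_eq_one_add_sum_erase_div (hα l).ne']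
  have hpos (l : Fin d) : 0 < γ / α l * ∑ i, α i :=
    mul_pos (div_pos (div_pos (by positivity) hSpos) (hα l))
      (sum_pos (fun i _ => hα i) univ_nonempty)
  have hdiag : Ztilde = diagonal fun l => ((γ / α l * ∑ i, α i : ℝ) : ℂ) := by
    simp only [Ztilde, smul_one_sub_sum_smul_clockZ_pow, hδ, hF,
      hω.ofReal_one_add_sub_sum_Icc_eq F hγ]
  refine ⟨hdiag, hpos, ?_⟩
  rw [hdiag, isUnit_diagonal, Pi.isUnit_iff]
  exact fun l => isUnit_iff_ne_zero.2 (Complex.ofReal_ne_zero.2 (hpos l).ne')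

theorem Ztilde_positive_definite (d : ℕ) (hd : 2 ≤ d) (α : Fin d → ℝ)
    (hα : ∀ i, 0 < α i) (hnorm : ∑ i, (α i) ^ 2 = 1) :
    let γ : ℝ := d / (∑ i : Fin d, ∑ j ∈ Finset.univ.erase i, α i / α j)
    let δ : ℕ → ℂ := fun k =>
      -(((γ / d : ℝ) : ℂ)) * ∑ i : Fin d, ∑ j ∈ Finset.univ.erase i,
        ((α i / α j : ℝ) : ℂ) * (rootOfUnity d) ^ (k * (d - (j : ℕ)))
    let Ztilde : Matrix (Fin d) (Fin d) ℂ :=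
      (((1 + γ : ℝ)) : ℂ) • (1 : Matrix (Fin d) (Fin d) ℂ)
        - ∑ k ∈ Finset.Icc 1 (d - 1), δ k • (clockZ d) ^ k
    Ztilde = Matrix.diagonal (fun l => (((γ / α l) * ∑ i, α i : ℝ) : ℂ)) ∧
    (∀ l : Fin d, 0 < (γ / α l) * ∑ i, α i) ∧ IsUnit Ztilde :=
  Ztilde_positive_definite_general d hd α hα
end

section
/- Let ρ be a density matrix on ℂ^d ⊗ ℂ^d (d = 2) and suppose (σ_z ⊗ B₀)ρ = ρ and (σ_x ⊗ B₁)ρ = ρ for unitary Hermitian operators B₀, B₁ on ℂ², with Tr₁(ρ) invertible. Then B₀B₁ + B₁B₀ = 0. -/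
open Matrix Kronecker
open scoped ComplexOrder

def sigmaZ : Matrix (Fin 2) (Fin 2) ℂ := !![1, 0; 0, -1]
def sigmaX : Matrix (Fin 2) (Fin 2) ℂ := !![0, 1; 1, 0]

/-!
If `(P ⊗ A) ρ = ρ` and `(Q ⊗ B) ρ = ρ`, applying both relations in either order gives
`(PQ ⊗ AB) ρ = ρ = (QP ⊗ BA) ρ`. For anticommuting `P = σ_z`, `Q = σ_x` this turns into
`(QP ⊗ (AB + BA)) ρ = 0`, and since `QP` is invertible, `(𝟙 ⊗ (AB + BA)) ρ = 0`.
Taking the partial trace over the first factor gives `(AB + BA) Tr₁ ρ = 0`, so `AB + BA = 0`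
once `Tr₁ ρ` is invertible.
-/

namespace Matrix

variable {R k l m n : Type*}

theorem neg_kronecker [Ring R] (A : Matrix l m R) (B : Matrix n k R) :
    (-A) ⊗ₖ B = -(A ⊗ₖ B) := by
  ext
  simp

def traceLeft [Fintype l] [AddCommMonoid R] (ρ : Matrix (l × m) (l × n) R) : Matrix m n R :=
  of fun j j' => ∑ i, ρ (i, j) (i, j')

theorem traceLeft_one_kronecker_mul [Fintype l] [Fintype m] [DecidableEq l] [Semiring R]
    (A : Matrix m m R) (ρ : Matrix (l × m) (l × n) R) :
    traceLeft (((1 : Matrix l l R) ⊗ₖ A) * ρ) = A * traceLeft ρ := by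
  ext j j'
  simp [traceLeft, mul_apply, Fintype.sum_prod_type, one_apply, Finset.mul_sum]
  exact Finset.sum_comm

theorem eq_zero_of_one_kronecker_mul_eq_zero [Fintype l] [Fintype m] [DecidableEq l]
    [DecidableEq m] [Semiring R] {A : Matrix m m R} {ρ : Matrix (l × m) (l × m) R}
    (hρ : IsUnit (traceLeft ρ))
    (h : ((1 : Matrix l l R) ⊗ₖ A) * ρ = 0) : A = 0 := by
  have h_trace := congrArg traceLeft h
  rw [traceLeft_one_kronecker_mul] at h_trace
  exact hρ.mul_left_eq_zero.1 (h_trace.trans (by ext; simp [traceLeft]))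

variable [CommRing R] [Fintype l] [Fintype m]

theorem kronecker_mul_mul_of_mul_eq_self {P Q : Matrix l l R} {A B : Matrix m m R}
    {ρ : Matrix (l × m) n R} (hP : (P ⊗ₖ A) * ρ = ρ) (hQ : (Q ⊗ₖ B) * ρ = ρ) :
    ((P * Q) ⊗ₖ (A * B)) * ρ = ρ := by
  rw [mul_kronecker_mul, Matrix.mul_assoc, hQ, hP]

theorem kronecker_anticommutator_mul_eq_zero {P Q : Matrix l l R} {A B : Matrix m m R}
    {ρ : Matrix (l × m) n R} (hPQ : P * Q = -(Q * P))
    (hP : (P ⊗ₖ A) * ρ = ρ) (hQ : (Q ⊗ₖ B) * ρ = ρ) :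
    ((Q * P) ⊗ₖ (A * B + B * A)) * ρ = 0 := by
  have hAB := kronecker_mul_mul_of_mul_eq_self hP hQ
  rw [hPQ, neg_kronecker, Matrix.neg_mul, neg_eq_iff_eq_neg] at hAB
  rw [kronecker_add, Matrix.add_mul, hAB, kronecker_mul_mul_of_mul_eq_self hQ hP, neg_add_cancel]

theorem one_kronecker_mul_eq_zero_of_isUnit [DecidableEq l] {M : Matrix l l R} (hM : IsUnit M)
    {A : Matrix m m R} {ρ : Matrix (l × m) n R} (h : (M ⊗ₖ A) * ρ = 0) :
    ((1 : Matrix l l R) ⊗ₖ A) * ρ = 0 := by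
  classical
  obtain ⟨u, rfl⟩ := hM
  rw [← Units.inv_mul u, ← one_mul A, mul_kronecker_mul, Matrix.mul_assoc, h, Matrix.mul_zero]

end Matrix

theorem sigmaZ_mul_sigmaX : sigmaZ * sigmaX = -(sigmaX * sigmaZ) := by
  ext i j
  fin_cases i <;> fin_cases j <;> simp [sigmaZ, sigmaX]

theorem sigmaX_mul_self : sigmaX * sigmaX = 1 := by
  ext i j
  fin_cases i <;> fin_cases j <;> simp [sigmaX]

theorem sigmaZ_mul_self : sigmaZ * sigmaZ = 1 := by
  ext i j
  fin_cases i <;> fin_cases j <;> simp [sigmaZ]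

theorem anticommutation_from_maximal_violation_general
    (ρ : Matrix (Fin 2 × Fin 2) (Fin 2 × Fin 2) ℂ)
    (B0 B1 : Matrix (Fin 2) (Fin 2) ℂ)
    (h0 : (sigmaZ ⊗ₖ B0) * ρ = ρ) (h1 : (sigmaX ⊗ₖ B1) * ρ = ρ)
    (hinv : IsUnit (Matrix.of fun j j' : Fin 2 => ∑ i : Fin 2, ρ (i, j) (i, j'))) :
    B0 * B1 + B1 * B0 = 0 := by
  have h_unit : IsUnit (sigmaX * sigmaZ) :=
    (IsUnit.of_mul_eq_one _ sigmaX_mul_self).mul (IsUnit.of_mul_eq_one _ sigmaZ_mul_self)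
  have h_ann := kronecker_anticommutator_mul_eq_zero sigmaZ_mul_sigmaX h0 h1
  exact eq_zero_of_one_kronecker_mul_eq_zero hinv
    (one_kronecker_mul_eq_zero_of_isUnit h_unit h_ann)

theorem anticommutation_from_maximal_violation
    (ρ : Matrix (Fin 2 × Fin 2) (Fin 2 × Fin 2) ℂ) (hρ : ρ.PosSemidef)
    (htr : ρ.trace = 1) (B0 B1 : Matrix (Fin 2) (Fin 2) ℂ)
    (hB0h : B0.IsHermitian) (hB0u : B0 * B0 = 1)
    (hB1h : B1.IsHermitian) (hB1u : B1 * B1 = 1)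
    (h0 : (sigmaZ ⊗ₖ B0) * ρ = ρ) (h1 : (sigmaX ⊗ₖ B1) * ρ = ρ)
    (hinv : IsUnit (Matrix.of fun j j' : Fin 2 => ∑ i : Fin 2, ρ (i, j) (i, j'))) :
    B0 * B1 + B1 * B0 = 0 :=
  anticommutation_from_maximal_violation_general ρ B0 B1 h0 h1 hinv
end

section
/- Let |ψ⟩ ∈ ℂ² ⊗ ℂ² ⊗ H_E be a unit vector satisfying (σ_z ⊗ σ_z ⊗ 𝟙_E)|ψ⟩ = |ψ⟩ and (σ_x ⊗ σ_x ⊗ 𝟙_E)|ψ⟩ = |ψ⟩. Then |ψ⟩ = (1/√2)(|00⟩ + |11⟩) ⊗ |aux⟩ for some unit vector |aux⟩ ∈ H_E. -/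
/-!
The σ_z ⊗ σ_z condition multiplies the |01⟩ and |10⟩ components by −1, so they vanish;
the σ_x ⊗ σ_x condition swaps |00⟩ and |11⟩, so their components agree. Hence ψ is the
Bell state tensored with √2 times its |00⟩ component, and that component has the norm of ψ.
-/

open Finset

noncomputable section

variable {ι : Type*}

/-- The product vector `(|00⟩ + |11⟩)/√2 ⊗ aux` in `ℂ² ⊗ ℂ² ⊗ ℂ^ι`. -/
def bellProduct (aux : ι → ℂ) : Fin 2 × Fin 2 × ι → ℂ :=
  fun x => (if x.1 = x.2.1 then ((1 / Real.sqrt 2 : ℝ) : ℂ) else 0) * aux x.2.2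

lemma sum_norm_sq_bellProduct [Fintype ι] (aux : ι → ℂ) :
    ∑ x, ‖bellProduct aux x‖ ^ 2 = ∑ k, ‖aux k‖ ^ 2 := by
  have h_half : ‖((1 / Real.sqrt 2 : ℝ) : ℂ)‖ ^ 2 = 1 / 2 := by
    rw [Complex.norm_real, Real.norm_eq_abs, sq_abs, div_pow, Real.sq_sqrt zero_le_two, one_pow]
  simp only [Fintype.sum_prod_type, Fin.sum_univ_two, bellProduct, norm_mul, mul_pow]
  simp only [Fin.isValue, if_true, Fin.zero_eq_one_iff, h_half, OfNat.ofNat_ne_one,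
    one_ne_zero, if_false, norm_zero, zero_pow two_ne_zero, zero_mul, add_zero, zero_add,
    sum_const_zero, ← mul_sum]
  ring

lemma apply_eq_zero_of_ne_of_zz_stable {ψ : Fin 2 × Fin 2 × ι → ℂ}
    (hz : ∀ (i j : Fin 2) (k : ι),
      (-1 : ℂ) ^ (i : ℕ) * (-1 : ℂ) ^ (j : ℕ) * ψ (i, j, k) = ψ (i, j, k))
    {i j : Fin 2} (hij : i ≠ j) (k : ι) : ψ (i, j, k) = 0 := by
  obtain ⟨rfl, rfl⟩ | ⟨rfl, rfl⟩ : i = 0 ∧ j = 1 ∨ i = 1 ∧ j = 0 := by omega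
  · simpa [CharZero.neg_eq_self_iff] using hz 0 1 k
  · simpa [CharZero.neg_eq_self_iff] using hz 1 0 k

lemma eq_bellProduct_of_zz_stable_of_xx_stable {ψ : Fin 2 × Fin 2 × ι → ℂ}
    (hz : ∀ (i j : Fin 2) (k : ι),
      (-1 : ℂ) ^ (i : ℕ) * (-1 : ℂ) ^ (j : ℕ) * ψ (i, j, k) = ψ (i, j, k))
    (hx : ∀ (i j : Fin 2) (k : ι), ψ (i + 1, j + 1, k) = ψ (i, j, k)) :
    ψ = bellProduct fun k => (Real.sqrt 2 : ℂ) * ψ (0, 0, k) := by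
  have h_off : ∀ {i j : Fin 2} (k : ι), i ≠ j → ψ (i, j, k) = 0 :=
    fun k hij => apply_eq_zero_of_ne_of_zz_stable hz hij k
  have h_diag : ∀ k, ψ (1, 1, k) = ψ (0, 0, k) := fun k => by simpa using hx 0 0 k
  have h_sqrt : (Real.sqrt 2 : ℂ) ≠ 0 := by exact_mod_cast (Real.sqrt_pos.mpr two_pos).ne'
  funext ⟨i, j, k⟩
  fin_cases i <;> fin_cases j <;> simp [bellProduct, h_off, h_diag, h_sqrt]

theorem bell_state_selftest (m : ℕ) (ψ : Fin 2 × Fin 2 × Fin m → ℂ)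
    (hnorm : ∑ x, ‖ψ x‖ ^ 2 = 1)
    (hz : ∀ (i j : Fin 2) (k : Fin m),
      ((-1 : ℂ) ^ (i : ℕ)) * ((-1 : ℂ) ^ (j : ℕ)) * ψ (i, j, k) = ψ (i, j, k))
    (hx : ∀ (i j : Fin 2) (k : Fin m), ψ (i + 1, j + 1, k) = ψ (i, j, k)) :
    ∃ aux : Fin m → ℂ, (∑ k, ‖aux k‖ ^ 2 = 1) ∧
      ∀ (i j : Fin 2) (k : Fin m),
        ψ (i, j, k) = (if i = j then ((1 / Real.sqrt 2 : ℝ) : ℂ) else 0) * aux k := by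
  have hψ := eq_bellProduct_of_zz_stable_of_xx_stable hz hx
  refine ⟨fun k => (Real.sqrt 2 : ℂ) * ψ (0, 0, k), ?_, fun i j k => congrFun hψ (i, j, k)⟩
  rw [← sum_norm_sq_bellProduct, ← hψ, hnorm]

end
end
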